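/- For any subset A of ℝ, if the Hattori space (ℝ, τ_A) is locally compact, then ℝ\A is closed in the Euclidean topology and discrete as a subspace of the Sorgenfrey line. -/

import Mathlib

open Set

/-- The Hattori topology on ℝ: points of `A` have Euclidean neighborhood base
`(x-ε, x+ε)`, points outside `A` have Sorgenfrey neighborhood base `[x, x+ε)`. -/
def hattori (A : Set ℝ) : TopologicalSpace ℝ where
  IsOpen U := ∀ x ∈ U, ∃ ε > (0 : ℝ),
    (x ∈ A → Ioo (x - ε) (x + ε) ⊆ U) ∧ (x ∉ A → Ico x (x + ε) ⊆ U)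
  isOpen_univ := fun x _ => ⟨1, one_pos, fun _ => subset_univ _, fun _ => subset_univ _⟩
  isOpen_inter := by
    intro U V hU hV x hx
    obtain ⟨ε₁, hε₁, h₁, h₁'⟩ := hU x hx.1
    obtain ⟨ε₂, hε₂, h₂, h₂'⟩ := hV x hx.2
    have l1 := min_le_left ε₁ ε₂
    have l2 := min_le_right ε₁ ε₂
    refine ⟨min ε₁ ε₂, lt_min hε₁ hε₂, fun hA => ?_, fun hA => ?_⟩
    · intro y hy
      exact ⟨h₁ hA ⟨by linarith [hy.1], by linarith [hy.2]⟩,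
             h₂ hA ⟨by linarith [hy.1], by linarith [hy.2]⟩⟩
    · intro y hy
      exact ⟨h₁' hA ⟨hy.1, by linarith [hy.2]⟩, h₂' hA ⟨hy.1, by linarith [hy.2]⟩⟩
  isOpen_sUnion := by
    intro S hS x hx
    obtain ⟨U, hU, hxU⟩ := hx
    obtain ⟨ε, hε, h, h'⟩ := hS U hU x hxU
    exact ⟨ε, hε, fun hA => (h hA).trans (subset_sUnion_of_mem hU),
      fun hA => (h' hA).trans (subset_sUnion_of_mem hU)⟩

/-- The Sorgenfrey (lower limit) topology on ℝ. -/
def sorgenfrey : TopologicalSpace ℝ :=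
  TopologicalSpace.generateFrom {S | ∃ a b : ℝ, S = Ico a b}

/-!
A compact set `K` of `τ_A` contains no interval `(a, b)` with `b ∉ A`: for such `b` the ray
`[b, ∞)` is `τ_A`-clopen, so `K ∩ (-∞, b)` is `τ_A`-compact, hence compact and closed for the
coarser Euclidean topology, although `b` lies in its closure. A compact neighbourhood of `x`
contains `[x, x + ε)`, and even `(x - ε, x + ε)` when `x ∈ A`, so these intervals without `x`
lie in `A`. This makes `A` Euclidean open and isolates every `b ∉ A` by `[b, b + ε)` in the
Sorgenfrey topology.
-/

open Topology

theorem isCompact_of_le {X : Type*} {t t' : TopologicalSpace X} (h : t ≤ t') {s : Set X}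
    (hs : @IsCompact X t s) : @IsCompact X t' s := by
  simpa using @IsCompact.image X X t t' s id hs (continuous_id_of_le h)

theorem hattori_le_euclidean (A : Set ℝ) : hattori A ≤ (inferInstance : TopologicalSpace ℝ) := by
  refine TopologicalSpace.le_def.2 fun U hU x hx => ?_
  obtain ⟨ε, hε, hball⟩ := Metric.isOpen_iff.1 hU x hx
  rw [Real.ball_eq_Ioo] at hball
  exact ⟨ε, hε, fun _ => hball, fun _ => (Ico_subset_Ioo_left (by linarith)).trans hball⟩

section

variable {A : Set ℝ}

theorem isOpen_Ici_hattori {b : ℝ} (hb : b ∉ A) : IsOpen[hattori A] (Ici b) := by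
  intro x hx
  rcases (mem_Ici.1 hx).eq_or_lt with rfl | hbx
  · exact ⟨1, one_pos, fun hA => (hb hA).elim, fun _ => Ico_subset_Ici_self⟩
  · refine ⟨x - b, sub_pos.2 hbx, fun _ => ?_,
      fun _ => Ico_subset_Ici_self.trans (Ici_subset_Ici.2 hbx.le)⟩
    rw [sub_sub_cancel]
    exact Ioo_subset_Ioi_self.trans Ioi_subset_Ici_self

theorem Ioo_subset_of_isCompact_hattori {K : Set ℝ} (hK : @IsCompact ℝ (hattori A) K)
    {a b : ℝ} (hab : Ioo a b ⊆ K) : Ioo a b ⊆ A := by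
  intro c hc
  by_contra hcA
  have hIio : IsClosed[hattori A] (Iio c) := by
    simpa only [compl_Ici] using @IsOpen.isClosed_compl _ (hattori A) _ (isOpen_Ici_hattori hcA)
  have hKc : IsCompact (K ∩ Iio c) :=
    isCompact_of_le (hattori_le_euclidean A) (@IsCompact.inter_right _ (hattori A) _ _ hK hIio)
  have hclosure : closure (Ioo a c) ⊆ K ∩ Iio c :=
    closure_minimal (subset_inter ((Ioo_subset_Ioo_right hc.2.le).trans hab) Ioo_subset_Iio_self)
      hKc.isClosed
  have hc_mem : c ∈ closure (Ioo a c) := by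
    rw [closure_Ioo hc.1.ne]
    exact right_mem_Icc.2 hc.1.le
  exact lt_irrefl c (hclosure hc_mem).2

theorem exists_Ico_subset_of_mem_nhds_hattori {s : Set ℝ} {x : ℝ}
    (hs : s ∈ @nhds ℝ (hattori A) x) :
    ∃ ε > 0, Ico x (x + ε) ⊆ s ∧ (x ∈ A → Ioo (x - ε) (x + ε) ⊆ s) := by
  obtain ⟨U, hUs, hU, hxU⟩ := (@mem_nhds_iff ℝ (hattori A) x s).1 hs
  obtain ⟨ε, hε, hA, hAc⟩ := hU x hxU
  refine ⟨ε, hε, ?_, fun hx => (hA hx).trans hUs⟩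
  by_cases hx : x ∈ A
  · exact (Ico_subset_Ioo_left (by linarith)).trans ((hA hx).trans hUs)
  · exact (hAc hx).trans hUs

theorem exists_Ioo_subset_of_weaklyLocallyCompact
    (h : @WeaklyLocallyCompactSpace ℝ (hattori A)) (x : ℝ) :
    ∃ ε > 0, Ioo x (x + ε) ⊆ A ∧ (x ∈ A → Ioo (x - ε) (x + ε) ⊆ A) := by
  obtain ⟨K, hK, hKx⟩ := @exists_compact_mem_nhds ℝ (hattori A) h x
  obtain ⟨ε, hε, hIco, hIoo⟩ := exists_Ico_subset_of_mem_nhds_hattori hKx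
  exact ⟨ε, hε, Ioo_subset_of_isCompact_hattori hK (Ioo_subset_Ico_self.trans hIco),
    fun hx => Ioo_subset_of_isCompact_hattori hK (hIoo hx)⟩

end

theorem isOpen_Ico_sorgenfrey (a b : ℝ) : IsOpen[sorgenfrey] (Ico a b) :=
  TopologicalSpace.GenerateOpen.basic _ ⟨a, b, rfl⟩

theorem discreteTopology_induced_sorgenfrey {S : Set ℝ}
    (h : ∀ b ∈ S, ∃ ε > 0, Ioo b (b + ε) ⊆ Sᶜ) :
    @DiscreteTopology S (TopologicalSpace.induced ((↑) : S → ℝ) sorgenfrey) := by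
  let _ := TopologicalSpace.induced ((↑) : S → ℝ) sorgenfrey
  refine discreteTopology_iff_isOpen_singleton.2 fun ⟨b, hb⟩ => ?_
  obtain ⟨ε, hε, hgap⟩ := h b hb
  refine (@isOpen_induced_iff _ _ sorgenfrey _ _).2 ⟨Ico b (b + ε), isOpen_Ico_sorgenfrey _ _, ?_⟩
  ext ⟨x, hx⟩
  simp only [mem_preimage, mem_Ico, mem_singleton_iff, Subtype.mk.injEq]
  constructor
  · rintro ⟨hbx, hxε⟩
    by_contra hne
    exact hgap ⟨lt_of_le_of_ne hbx (Ne.symm hne), hxε⟩ hx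
  · rintro rfl
    exact ⟨le_rfl, by linarith⟩

theorem stmt16 (A : Set ℝ) (h : @WeaklyLocallyCompactSpace ℝ (hattori A)) :
    IsClosed Aᶜ ∧
      @DiscreteTopology ↑(Aᶜ)
        (TopologicalSpace.induced ((↑) : ↑(Aᶜ) → ℝ) sorgenfrey) := by
  have key := exists_Ioo_subset_of_weaklyLocallyCompact h
  refine ⟨?_, discreteTopology_induced_sorgenfrey fun b _ => ?_⟩
  · rw [isClosed_compl_iff, Metric.isOpen_iff]
    intro x hx
    obtain ⟨ε, hε, -, hball⟩ := key x
    exact ⟨ε, hε, by rw [Real.ball_eq_Ioo]; exact hball hx⟩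
  · obtain ⟨ε, hε, hgap, -⟩ := key b
    exact ⟨ε, hε, (compl_compl A).symm ▸ hgap⟩
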